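/- arXiv:1704.06438 — 4 statements merged into one kernel-verified Lean document; each statement's English description precedes it below -/
import Mathlib

section
/- Let H be a finite-dimensional algebra, and let M(β₁),…,M(β_r) be finite-dimensional H-modules such that Hom_H(M(β_i), M(β_j)) = 0 for all i < j, and such that each M(β_j) has projective dimension at most 1 and Ext¹_H(M(β_j), τ M(β_j')) is governed by the Auslander–Reiten formula Ext¹_H(X,Y) ≅ D Hom_H(Y, τX), with τ M(β_j) ≅ M(β_s) for some s > j whenever τ M(β_j) ≠ 0. Then Ext¹_H(M(β_j), M(β_i)) = 0 for all j ≥ i. -/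
/-- Let `H = A` be a finite-dimensional algebra and `M β₁, …, M βᵣ` modules
with `Hom(M i, M j) = 0` for `i < j`, each of projective dimension at most one, so that
the Auslander–Reiten formula `Ext¹(M j, M i) ≅ D Hom(M i, τ(M j))` holds, and with
`τ(M j) ≅ M s` for some `s > j` whenever `τ(M j) ≠ 0`.  Then `Ext¹(M j, M i) = 0`
for all `j ≥ i`.  (Hom-spaces are taken with their `K`-dimensions; `ext1 j i` denotes
`dim_K Ext¹_H(M j, M i)`, and the Auslander–Reiten formula is the hypothesis `hAR`.) -/
theorem stmt_5 {K : Type*} [Field K] {A : Type*} [Ring A] [Algebra K A]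
    {r : ℕ} (M : Fin r → Type*) [∀ i, AddCommGroup (M i)] [∀ i, Module A (M i)]
    [∀ i, Module K (M i)] [∀ i, SMulCommClass A K (M i)]
    (τ : Fin r → Option (Fin r))   -- `τ j = none` encodes `τ(M j) = 0`
    (ext1 : Fin r → Fin r → ℕ)     -- `ext1 j i = dim_K Ext¹_H(M j, M i)`
    (hHom : ∀ i j : Fin r, i < j → Module.finrank K (M i →ₗ[A] M j) = 0)
    (hτ : ∀ j s : Fin r, τ j = some s → j < s)
    (hAR : ∀ i j : Fin r, ext1 j i =
      match τ j with
      | some s => Module.finrank K (M i →ₗ[A] M s)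
      | none => 0) :
    ∀ i j : Fin r, i ≤ j → ext1 j i = 0 := by
  intro i j hij
  rw [hAR i j]
  cases h : τ j with
  | none => rfl
  | some s => exact hHom i s (lt_of_le_of_lt hij (hτ j s h))
end

section
/- Let A be an abelian category and M an object admitting a filtration 0 = M₀ ⊂ M₁ ⊂ ⋯ ⊂ M_t = M with each subquotient M_i/M_{i−1} isomorphic to one of fixed objects X₁,…,X_r, where Ext¹(X_j, X_i) = 0 for all j ≥ i. Let a_j be the number of indices i with M_i/M_{i−1} ≅ X_j. Then M admits a filtration 0 = N_r ⊆ N_{r−1} ⊆ ⋯ ⊆ N₀ = M with N_{j−1}/N_j ≅ X_j^{a_j} for each 1 ≤ j ≤ r. -/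
/-!
Induct on the length of the given filtration. Removing its top layer `M / M' ≅ X_k`, the
induction hypothesis sorts `M'` as `M' = N'₀ ⊇ ⋯ ⊇ N'_r` with layers `X_j^{a_j}`. The quotient
`N'₀ / N'_{k+1}` is an iterated extension of the `X_j^{a_j}` with `j ≤ k`, so `Ext¹(X_k, -)`
vanishes on it and `0 → N'₀ / N'_{k+1} → M / N'_{k+1} → X_k → 0` splits: there is `T` with
`T ⊓ M' = N'_{k+1}` and `T ⊔ M' = M`. Adding `T` to `N'₀, …, N'_k` leaves the layers other than
the `k`-th unchanged, and turns the `k`-th into an extension of `T / N'_{k+1} ≅ X_k` by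
`X_k^{a_k}`, which splits since `Ext¹(X_k, X_k) = 0`.
-/

open Submodule LinearMap Function

namespace Submodule

variable {R M : Type*} [Ring R] [AddCommGroup M] [Module R M]

abbrev Subquotient (B A : Submodule R M) : Type _ := ↥B ⧸ comap B.subtype A

instance (B : Submodule R M) : Subsingleton (Subquotient B B) :=
  Quotient.subsingleton_iff.2 (comap_subtype_self B)

variable {A B C T : Submodule R M}

def subquotientCongr {A' B' : Submodule R M} (hB : B = B') (hA : A = A') :
    Subquotient B A ≃ₗ[R] Subquotient B' A' := by
  subst hB hA
  exact LinearEquiv.refl R _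

noncomputable def subquotientEquivOfSurjective {V : Type*} [AddCommGroup V] [Module R V]
    (g : ↥B →ₗ[R] V) (hg : Surjective g) (hker : ker g = comap B.subtype A) :
    Subquotient B A ≃ₗ[R] V :=
  (quotEquivOfEq _ _ hker.symm).trans (g.quotKerEquivOfSurjective hg)

noncomputable def subquotientEquivOfInfEqOfSupEq (hinf : T ⊓ B = A) (hsup : T ⊔ B = C) :
    Subquotient C B ≃ₗ[R] Subquotient T A :=
  subquotientCongr hsup.symm rfl ≪≫ₗ (quotientInfEquivSupQuotient T B).symm ≪≫ₗ
    quotEquivOfEq _ _ (by rw [← comap_inf, hinf])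

noncomputable def subquotientSupSupEquiv (hAB : A ≤ B) (hT : B ⊓ T ≤ A) :
    Subquotient (B ⊔ T) (A ⊔ T) ≃ₗ[R] Subquotient B A :=
  subquotientEquivOfInfEqOfSupEq
    (by rw [inf_comm, sup_inf_assoc_of_le T hAB, sup_eq_left, inf_comm]; exact hT)
    (by rw [← sup_assoc, sup_eq_left.2 hAB])

def subquotientInclusion (A : Submodule R M) (hBC : B ≤ C) :
    Subquotient B A →ₗ[R] Subquotient C A :=
  mapQ _ _ (inclusion hBC)
    (show comap B.subtype A ≤ comap (inclusion hBC) (comap C.subtype A) from fun _ hx => hx)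

theorem subquotientInclusion_injective (A : Submodule R M) (hBC : B ≤ C) :
    Injective (subquotientInclusion A hBC) := by
  rw [← ker_eq_bot, eq_bot_iff]
  rintro q hq
  obtain ⟨x, rfl⟩ := Quotient.mk_surjective _ q
  rw [mem_ker, subquotientInclusion, mapQ_apply, Quotient.mk_eq_zero] at hq
  rw [mem_bot, Quotient.mk_eq_zero]
  exact hq

theorem exact_subquotientInclusion_factor (hAB : A ≤ B) (hBC : B ≤ C) :
    Exact (subquotientInclusion A hBC) (factor (comap_mono hAB : comap C.subtype A ≤ _)) := by
  rintro q
  obtain ⟨⟨x, hxC⟩, rfl⟩ := Quotient.mk_surjective _ q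
  simp only [factor, mapQ_apply, LinearMap.id_apply]
  rw [Quotient.mk_eq_zero]
  constructor
  · intro hxB
    exact ⟨Quotient.mk ⟨x, hxB⟩, rfl⟩
  · rintro ⟨p, hp⟩
    obtain ⟨⟨y, hyB⟩, rfl⟩ := Quotient.mk_surjective _ p
    rw [subquotientInclusion, mapQ_apply, Quotient.eq] at hp
    have hxy : y - x ∈ B := hAB hp
    simpa using sub_mem hyB hxy

end Submodule

/-- `Ext¹_R(Z, Y) = 0`, in the form: every extension `0 → Y → E → Z → 0` splits. -/
def ExtensionsSplit (R : Type*) [Ring R] (Z Y : Type*) [AddCommGroup Z] [Module R Z]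
    [AddCommGroup Y] [Module R Y] : Prop :=
  ∀ (E : Type) [AddCommGroup E] [Module R E] (f : Y →ₗ[R] E) (g : E →ₗ[R] Z),
    Injective f → Surjective g → Exact f g → ∃ s : Z →ₗ[R] E, g ∘ₗ s = LinearMap.id

theorem LinearMap.exists_comp_eq_id_of_isCompl {R E Z : Type*} [Ring R] [AddCommGroup E]
    [Module R E] [AddCommGroup Z] [Module R Z] {g : E →ₗ[R] Z} (hg : Surjective g)
    {S : Submodule R E} (h : IsCompl (ker g) S) : ∃ s : Z →ₗ[R] E, g ∘ₗ s = LinearMap.id := by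
  refine ⟨S.subtype ∘ₗ (quotientEquivOfIsCompl _ S h).toLinearMap ∘ₗ
    (g.quotKerEquivOfSurjective hg).symm.toLinearMap, LinearMap.ext fun z => ?_⟩
  obtain ⟨q, rfl⟩ := (g.quotKerEquivOfSurjective hg).surjective z
  simp only [LinearMap.comp_apply, LinearEquiv.coe_coe, LinearEquiv.symm_apply_apply,
    coe_subtype, id_apply]
  rw [← quotKerEquivOfSurjective_apply_mk g hg, mk_quotientEquivOfIsCompl_apply]

namespace ExtensionsSplit

variable {R : Type*} [Ring R] {Z Z' Y Y' Y₁ Y₂ : Type*} [AddCommGroup Z] [Module R Z]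
  [AddCommGroup Z'] [Module R Z'] [AddCommGroup Y] [Module R Y] [AddCommGroup Y'] [Module R Y']
  [AddCommGroup Y₁] [Module R Y₁] [AddCommGroup Y₂] [Module R Y₂]
  {M : Type} [AddCommGroup M] [Module R M] {A B C : Submodule R M}

theorem congr (h : ExtensionsSplit R Z Y) (eZ : Z ≃ₗ[R] Z') (eY : Y ≃ₗ[R] Y') :
    ExtensionsSplit R Z' Y' := by
  intro E _ _ f g hf hg hfg
  obtain ⟨s, hs⟩ := h E (f ∘ₗ eY.toLinearMap) (eZ.symm.toLinearMap ∘ₗ g)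
    (hf.comp eY.injective) (eZ.symm.surjective.comp hg)
    (by rwa [LinearEquiv.precomp_exact_iff_exact, LinearEquiv.postcomp_exact_iff_exact])
  exact ⟨s ∘ₗ eZ.symm.toLinearMap, LinearMap.ext fun z =>
    eZ.symm.injective (by simpa using LinearMap.congr_fun hs (eZ.symm z))⟩

theorem of_subsingleton [Subsingleton Y] : ExtensionsSplit R Z Y := by
  intro E _ _ f g _ hg hfg
  have hg' : Injective g := (injective_iff_map_eq_zero g).2 fun x hx => by
    obtain ⟨y, rfl⟩ := (hfg x).1 hx
    rw [Subsingleton.elim y 0, map_zero]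
  exact ⟨(LinearEquiv.ofBijective g ⟨hg', hg⟩).symm.toLinearMap,
    LinearMap.ext (LinearEquiv.ofBijective g ⟨hg', hg⟩).apply_symm_apply⟩

theorem exists_inf_eq_sup_eq (h : ExtensionsSplit R (Subquotient C B) (Subquotient B A))
    (hAB : A ≤ B) (hBC : B ≤ C) : ∃ T : Submodule R M, T ⊓ B = A ∧ T ⊔ B = C := by
  set v := factor (comap_mono hAB : comap C.subtype A ≤ _)
  obtain ⟨s, hs⟩ := h _ (subquotientInclusion A hBC) v (subquotientInclusion_injective A hBC)
    (factor_surjective _) (exact_subquotientInclusion_factor hAB hBC)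
  have hvs : ∀ z, v (s z) = z := LinearMap.congr_fun hs
  refine ⟨map C.subtype (comap (mkQ _) (range s)), le_antisymm ?_ ?_, le_antisymm ?_ ?_⟩
  · rintro _ ⟨⟨y, ⟨z, hz⟩, rfl⟩, hyB⟩
    have hz0 : z = 0 := by
      rw [← hvs z, hz]
      exact (Submodule.Quotient.mk_eq_zero _).2 hyB
    rw [hz0, map_zero, eq_comm, mkQ_apply, Submodule.Quotient.mk_eq_zero] at hz
    exact hz
  · intro x hx
    refine ⟨⟨⟨x, hBC (hAB hx)⟩, ⟨0, ?_⟩, rfl⟩, hAB hx⟩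
    rw [map_zero, eq_comm, mkQ_apply, Submodule.Quotient.mk_eq_zero]
    exact hx
  · exact sup_le (map_subtype_le _ _) hBC
  · intro x hx
    obtain ⟨y', hy'⟩ :=
      Submodule.Quotient.mk_surjective _ (s (v (Submodule.Quotient.mk ⟨x, hx⟩)))
    have hB : ⟨x, hx⟩ - y' ∈ comap C.subtype B := by
      rw [← Submodule.Quotient.mk_eq_zero]
      change v (Submodule.Quotient.mk (⟨x, hx⟩ - y')) = 0
      rw [Submodule.Quotient.mk_sub, map_sub, hy', hvs, sub_self]
    exact mem_sup.2 ⟨y', ⟨y', ⟨_, hy'.symm⟩, rfl⟩, _, hB, by simp⟩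

theorem of_exact (u : Y₁ →ₗ[R] Y) (v : Y →ₗ[R] Y₂) (hu : Injective u) (hv : Surjective v)
    (huv : Exact u v) (h₁ : ExtensionsSplit R Z Y₁) (h₂ : ExtensionsSplit R Z Y₂) :
    ExtensionsSplit R Z Y := by
  intro E _ _ f g hf hg hfg
  set P := range (f ∘ₗ u) with hPdef
  have hP : P ≤ range f := range_comp_le_range u f
  have e₁ : Subquotient P ⊥ ≃ₗ[R] Y₁ :=
    subquotientEquivOfSurjective
      (LinearEquiv.ofInjective (f ∘ₗ u) (hf.comp hu)).symm.toLinearMap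
      (LinearEquiv.surjective _) (by simp)
  have e₂ : Subquotient (range f) P ≃ₗ[R] Y₂ := by
    refine subquotientEquivOfSurjective (v ∘ₗ (LinearEquiv.ofInjective f hf).symm.toLinearMap)
      (hv.comp (LinearEquiv.surjective _)) ?_
    ext x
    obtain ⟨y, rfl⟩ := (LinearEquiv.ofInjective f hf).surjective x
    rw [mem_ker, LinearMap.comp_apply, LinearEquiv.coe_coe, LinearEquiv.symm_apply_apply, huv,
      mem_comap, coe_subtype, LinearEquiv.ofInjective_apply, hPdef, mem_range]
    exact ⟨fun ⟨x, hx⟩ => ⟨x, by rw [LinearMap.comp_apply, hx]⟩, fun ⟨x, hx⟩ => ⟨x, hf hx⟩⟩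
  have e₃ : Subquotient ⊤ (range f) ≃ₗ[R] Z :=
    subquotientEquivOfSurjective (g ∘ₗ (⊤ : Submodule R E).subtype)
      (fun z => (hg z).elim fun x hx => ⟨⟨x, trivial⟩, hx⟩)
      (by rw [ker_comp, hfg.linearMap_ker_eq])
  -- Complement `range f / P ≅ Y₂` relative to `P`, then `P ≅ Y₁` inside the complement `T₁`.
  obtain ⟨T₁, hT₁inf, hT₁sup⟩ := (h₂.congr e₃.symm e₂.symm).exists_inf_eq_sup_eq hP le_top
  have hPT₁ : P ≤ T₁ := hT₁inf ▸ inf_le_left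
  have e₄ : Subquotient T₁ P ≃ₗ[R] Z := (subquotientEquivOfInfEqOfSupEq hT₁inf hT₁sup).symm ≪≫ₗ e₃
  obtain ⟨T₀, hT₀inf, hT₀sup⟩ := (h₁.congr e₄.symm e₁.symm).exists_inf_eq_sup_eq bot_le hPT₁
  have hT₀T₁ : T₀ ≤ T₁ := hT₀sup ▸ le_sup_left
  refine LinearMap.exists_comp_eq_id_of_isCompl hg (S := T₀) ⟨?_, ?_⟩
  · rw [disjoint_iff, hfg.linearMap_ker_eq, inf_comm, ← inf_eq_left.2 hT₀T₁, inf_assoc,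
      hT₁inf, hT₀inf]
  · rw [codisjoint_iff, hfg.linearMap_ker_eq, sup_comm, ← sup_eq_right.2 hP, ← sup_assoc,
      hT₀sup, hT₁sup]

theorem prod (h₁ : ExtensionsSplit R Z Y₁) (h₂ : ExtensionsSplit R Z Y₂) :
    ExtensionsSplit R Z (Y₁ × Y₂) :=
  of_exact _ _ inl_injective snd_surjective Exact.inl_snd h₁ h₂

theorem pi (h : ExtensionsSplit R Z Y) : ∀ n : ℕ, ExtensionsSplit R Z (Fin n → Y)
  | 0 => of_subsingleton
  | n + 1 => (h.prod (h.pi n)).congr (LinearEquiv.refl R Z) (Fin.consLinearEquiv R fun _ => Y)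

theorem subquotient_trans (hAB : A ≤ B) (hBC : B ≤ C)
    (h₁ : ExtensionsSplit R Z (Subquotient B A)) (h₂ : ExtensionsSplit R Z (Subquotient C B)) :
    ExtensionsSplit R Z (Subquotient C A) :=
  of_exact _ _ (subquotientInclusion_injective A hBC) (factor_surjective _)
    (exact_subquotientInclusion_factor hAB hBC) h₁ h₂

theorem subquotient_of_antitone {n : ℕ} {Q : Fin (n + 1) → Submodule R M} (hQ : Antitone Q)
    (m : Fin (n + 1)) (h : ∀ i : Fin n, i.castSucc < m →
      ExtensionsSplit R Z (Subquotient (Q i.castSucc) (Q i.succ))) :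
    ExtensionsSplit R Z (Subquotient (Q 0) (Q m)) := by
  induction m using Fin.induction with
  | zero => exact of_subsingleton
  | succ i ih =>
    exact subquotient_trans (hQ Fin.castSucc_lt_succ.le) (hQ (Fin.zero_le _))
      (h i Fin.castSucc_lt_succ) (ih fun i' hi' => h i' (hi'.trans Fin.castSucc_lt_succ))

theorem nonempty_subquotient_equiv_prod (h : ExtensionsSplit R (Subquotient C B) (Subquotient B A))
    (hAB : A ≤ B) (hBC : B ≤ C) :
    Nonempty (Subquotient C A ≃ₗ[R] Subquotient B A × Subquotient C B) := by
  obtain ⟨s, hs⟩ := h _ (subquotientInclusion A hBC) _ (subquotientInclusion_injective A hBC)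
    (factor_surjective _) (exact_subquotientInclusion_factor hAB hBC)
  exact ⟨((exact_subquotientInclusion_factor hAB hBC).splitSurjectiveEquiv
    (subquotientInclusion_injective A hBC) ⟨s, hs⟩).1⟩

theorem nonempty_subquotient_sup_equiv_pi (hY : ExtensionsSplit R Y Y) {T : Submodule R M}
    (hAB : A ≤ B) (hTB : T ⊓ B = A) {n : ℕ} (eB : Subquotient B A ≃ₗ[R] (Fin n → Y))
    (eT : Subquotient T A ≃ₗ[R] Y) :
    Nonempty (Subquotient (B ⊔ T) A ≃ₗ[R] (Fin (n + 1) → Y)) := by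
  have e_top : Subquotient (B ⊔ T) B ≃ₗ[R] Y :=
    subquotientEquivOfInfEqOfSupEq hTB (sup_comm _ _) ≪≫ₗ eT
  obtain ⟨e⟩ := ((hY.pi n).congr e_top.symm eB.symm).nonempty_subquotient_equiv_prod hAB
    le_sup_left
  exact ⟨e ≪≫ₗ eB.prodCongr e_top ≪≫ₗ LinearEquiv.prodComm R _ _ ≪≫ₗ
    Fin.consLinearEquiv R fun _ => Y⟩

end ExtensionsSplit

theorem Antitone.ite_sup {α β : Type*} [Preorder α] [DecidableLE α] [SemilatticeSup β]
    {f : α → β} (hf : Antitone f) (m : α) (b : β) :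
    Antitone fun j => if j ≤ m then f j ⊔ b else f j := by
  intro j₁ j₂ h
  dsimp only
  split_ifs with h₂ h₁ h₁
  · exact sup_le_sup_right (hf h) b
  · exact absurd (h.trans h₂) h₁
  · exact (hf h).trans le_sup_left
  · exact hf h

section Sorting

variable {R : Type*} [Ring R] {M : Type} [AddCommGroup M] [Module R M]
  {r : ℕ} {X : Fin r → Type*} [∀ j, AddCommGroup (X j)] [∀ j, Module R (X j)]

theorem exists_inf_eq_sup_eq_of_layers
    (hX : ∀ i j : Fin r, i ≤ j → ExtensionsSplit R (X j) (X i))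
    {N' : Fin (r + 1) → Submodule R M} (hN' : Antitone N') {a : Fin r → ℕ}
    (hlayer : ∀ j, Nonempty (Subquotient (N' j.castSucc) (N' j.succ) ≃ₗ[R] (Fin (a j) → X j)))
    {W : Submodule R M} (hW : N' 0 ≤ W) {k : Fin r} (ek : Subquotient W (N' 0) ≃ₗ[R] X k) :
    ∃ T : Submodule R M, T ⊓ N' 0 = N' k.succ ∧ T ⊔ N' 0 = W := by
  have hbelow : ExtensionsSplit R (X k) (Subquotient (N' 0) (N' k.succ)) :=
    ExtensionsSplit.subquotient_of_antitone hN' k.succ fun i hi =>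
      ((hX i k (Fin.castSucc_lt_succ_iff.1 hi)).pi (a i)).congr (LinearEquiv.refl R _)
        (hlayer i).some.symm
  exact (hbelow.congr ek.symm (LinearEquiv.refl R _)).exists_inf_eq_sup_eq
    (hN' (Fin.zero_le _)) hW

theorem exists_antitone_of_insert
    (hX : ∀ i j : Fin r, i ≤ j → ExtensionsSplit R (X j) (X i))
    {N' : Fin (r + 1) → Submodule R M} (hN' : Antitone N') {a : Fin r → ℕ}
    (hlayer : ∀ j, Nonempty (Subquotient (N' j.castSucc) (N' j.succ) ≃ₗ[R] (Fin (a j) → X j)))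
    {W : Submodule R M} (hW : N' 0 ≤ W) {k : Fin r}
    (hk : Nonempty (Subquotient W (N' 0) ≃ₗ[R] X k)) :
    ∃ N : Fin (r + 1) → Submodule R M, Antitone N ∧ N 0 = W ∧ N (Fin.last r) = N' (Fin.last r) ∧
      ∀ j, Nonempty (Subquotient (N j.castSucc) (N j.succ) ≃ₗ[R]
        (Fin (a j + if k = j then 1 else 0) → X j)) := by
  obtain ⟨ek⟩ := hk
  obtain ⟨T, hTinf, hTsup⟩ := exists_inf_eq_sup_eq_of_layers hX hN' hlayer hW ek
  set N : Fin (r + 1) → Submodule R M := fun j => if j ≤ k.castSucc then N' j ⊔ T else N' j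
  have hN_of_le : ∀ j, j ≤ k.castSucc → N j = N' j ⊔ T := fun j hj => if_pos hj
  have hN_of_not_le : ∀ j, ¬j ≤ k.castSucc → N j = N' j := fun j hj => if_neg hj
  refine ⟨N, hN'.ite_sup k.castSucc T, ?_, ?_, fun j => ?_⟩
  · rw [hN_of_le 0 (Fin.zero_le _), sup_comm, hTsup]
  · exact hN_of_not_le _ (not_le.2 (Fin.castSucc_lt_last k))
  rcases lt_trichotomy j k with hjk | rfl | hkj
  · rw [hN_of_le _ (Fin.castSucc_le_castSucc_iff.2 hjk.le),
      hN_of_le _ (Fin.succ_le_castSucc_iff.2 hjk), if_neg hjk.ne', add_zero]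
    refine ⟨subquotientSupSupEquiv (hN' Fin.castSucc_lt_succ.le) ?_ ≪≫ₗ (hlayer j).some⟩
    calc N' j.castSucc ⊓ T ≤ T ⊓ N' 0 :=
          inf_comm (N' j.castSucc) T ▸ inf_le_inf_left T (hN' (Fin.zero_le _))
      _ = N' k.succ := hTinf
      _ ≤ N' j.succ := hN' (Fin.succ_le_succ_iff.2 hjk.le)
  · rw [hN_of_le _ le_rfl, hN_of_not_le _ (not_le.2 Fin.castSucc_lt_succ), if_pos rfl]
    have hTj : T ⊓ N' j.castSucc = N' j.succ :=
      le_antisymm (hTinf ▸ inf_le_inf_left T (hN' (Fin.zero_le _)))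
        (le_inf (hTinf ▸ inf_le_left) (hN' Fin.castSucc_lt_succ.le))
    exact (hX j j le_rfl).nonempty_subquotient_sup_equiv_pi (hN' Fin.castSucc_lt_succ.le) hTj
      (hlayer j).some ((subquotientEquivOfInfEqOfSupEq hTinf hTsup).symm ≪≫ₗ ek)
  · rw [hN_of_not_le _ (not_le.2 (Fin.castSucc_lt_castSucc_iff.2 hkj)),
      hN_of_not_le _ (not_le.2 (Fin.castSucc_lt_succ_iff.2 hkj.le)), if_neg hkj.ne, add_zero]
    exact hlayer j

theorem exists_antitone_of_monotone
    (hX : ∀ i j : Fin r, i ≤ j → ExtensionsSplit R (X j) (X i)) {t : ℕ}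
    {Mf : Fin (t + 1) → Submodule R M} (hMf : Monotone Mf) {c : Fin t → Fin r}
    (hlayer : ∀ i, Nonempty (Subquotient (Mf i.succ) (Mf i.castSucc) ≃ₗ[R] X (c i))) :
    ∃ N : Fin (r + 1) → Submodule R M, Antitone N ∧ N 0 = Mf (Fin.last t) ∧
      N (Fin.last r) = Mf 0 ∧ ∀ j, Nonempty (Subquotient (N j.castSucc) (N j.succ) ≃ₗ[R]
        (Fin ((Finset.univ.filter fun i => c i = j).card) → X j)) := by
  induction t with
  | zero =>
    refine ⟨fun _ => Mf 0, antitone_const, rfl, rfl, fun j => ?_⟩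
    rw [Finset.univ_eq_empty, Finset.filter_empty, Finset.card_empty]
    exact ⟨LinearEquiv.ofSubsingleton _ _⟩
  | succ t ih =>
    obtain ⟨N', hN', hN'0, hN'last, hN'layer⟩ :=
      ih (Mf := fun i => Mf i.castSucc) (hMf.comp Fin.strictMono_castSucc.monotone) fun i => by
        simpa only [Fin.succ_castSucc] using hlayer i.castSucc
    have htop := hlayer (Fin.last t)
    rw [Fin.succ_last, ← hN'0] at htop
    obtain ⟨N, hN, hN0, hNlast, hNlayer⟩ := exists_antitone_of_insert hX hN' hN'layer
      (hN'0 ▸ hMf (Fin.castSucc_lt_last _).le) htop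
    refine ⟨N, hN, hN0, hNlast.trans hN'last, fun j => ?_⟩
    rw [Finset.card_filter, Fin.sum_univ_castSucc, ← Finset.card_filter]
    exact hNlayer j

end Sorting

/-- In an abelian category (here: modules over a ring `R`), suppose `M` has
a filtration `0 = M₀ ⊂ M₁ ⊂ ⋯ ⊂ M_t = M` whose subquotients are among fixed objects
`X₁, …, X_r` with `Ext¹(X j, X i) = 0` for `j ≥ i` (encoded: every short exact sequence
`0 → X i → E → X j → 0` with `i ≤ j` splits).  Let `a j` be the number of indices with
subquotient `X j`.  Then `M` has a filtration `0 = N_r ⊆ ⋯ ⊆ N₁ ⊆ N₀ = M` with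
`N_{j−1}/N_j ≅ X_j^{a_j}` for each `j`. -/
theorem stmt_6 {R : Type} [Ring R] {M : Type} [AddCommGroup M] [Module R M]
    {r t : ℕ} (X : Fin r → Type) [∀ j, AddCommGroup (X j)] [∀ j, Module R (X j)]
    -- `Ext¹(X j, X i) = 0` for all `j ≥ i`: short exact sequences `0 → Xᵢ → E → Xⱼ → 0` split
    (hext : ∀ i j : Fin r, i ≤ j →
      ∀ (E : Type) (_ : AddCommGroup E) (_ : Module R E)
        (f : X i →ₗ[R] E) (g : E →ₗ[R] X j),
        Function.Injective f → Function.Surjective g →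
        LinearMap.range f = LinearMap.ker g →
        ∃ h : X j →ₗ[R] E, g ∘ₗ h = LinearMap.id)
    -- the given filtration with subquotients `X (c i)`
    (Mf : Fin (t + 1) → Submodule R M) (hmono : Monotone Mf)
    (hbot : Mf 0 = ⊥) (htop : Mf (Fin.last t) = ⊤)
    (c : Fin t → Fin r)
    (hquot : ∀ i : Fin t, Nonempty
      ((↥(Mf i.succ) ⧸ (Submodule.comap (Mf i.succ).subtype (Mf i.castSucc)))
        ≃ₗ[R] X (c i))) :
    ∃ N : Fin (r + 1) → Submodule R M, Antitone N ∧ N 0 = ⊤ ∧ N (Fin.last r) = ⊥ ∧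
      ∀ j : Fin r, Nonempty
        ((↥(N j.castSucc) ⧸ (Submodule.comap (N j.castSucc).subtype (N j.succ)))
          ≃ₗ[R] (Fin ((Finset.univ.filter fun i => c i = j).card) → X j)) := by
  have hX : ∀ i j : Fin r, i ≤ j → ExtensionsSplit R (X j) (X i) :=
    fun i j hij E _ _ f g hf hg hfg => hext i j hij E _ _ f g hf hg hfg.linearMap_ker_eq.symm
  obtain ⟨N, hN, hN0, hNlast, hNlayer⟩ := exists_antitone_of_monotone hX hmono hquot
  exact ⟨N, hN, hN0.trans htop, hNlast.trans hbot, hNlayer⟩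
end

section
/- Let G be a group with elements x_i(t), y_i(t) (t ∈ ℂ, 1 ≤ i ≤ n) and lifts s̄_i of simple reflections satisfying the relations x_i(1)s̄_i = y_i(1)x_i(−1), x_i(t)y_j(s) = y_j(s)x_i(t) for i ≠ j, and x_β(t)s̄_i = s̄_i x_{s_i(β)}(t') for some t' whenever β and s_i(β) are positive roots. Then for any enumeration (i₁,…,i_n) of {1,…,n} there exist w₁,…,w_n ∈ ℂ such that x_{i₁}(1)⋯x_{i_n}(1) s̄_{i_n}⋯s̄_{i₁} = y_{i_n}(1)⋯y_{i₁}(1) · x_{γ₁'}(w_n) x_{γ₂'}(w_{n−1}) ⋯ x_{γ_n'}(w₁), where γ_k' = s_{i₁}⋯s_{i_{k−1}}(α_{i_k})-type positive-root one-parameter elements, i.e. the right factor lies in the subgroup N generated by the x_β(t) for positive roots β. -/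
/-!
Induct on the word, peeling off its first letter `a`. For the rest `L` one has
`x_L s̄_L^rev = y_L^rev Γ_L` with `Γ_L` a product of root elements `x_γ(·)`, `γ ∈ inversionRoots L`.
Since `a ∉ L`, `x_a(1)` commutes past `y_L^rev`; pushing `s̄_a` leftward through `Γ_L` replaces
each `γ` by `s_a γ`, which is positive by assumption; finally `x_a(1) s̄_a = y_a(1) x_a(-1)`
supplies the new factor `y_a(1)` and the new first root `α_a`.
-/

section RootWords

variable {G ι V K : Type*} [Group G]

/-- `(inversionRoots σ α L)[k] = s_{L₀} ⋯ s_{L_{k-1}} (α_{L_k})`, the roots `γ_k` of the paper. -/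
def inversionRoots (σ : ι → V → V) (α : ι → V) : List ι → List V
  | [] => []
  | a :: L => α a :: (inversionRoots σ α L).map (σ a)

@[simp]
theorem length_inversionRoots (σ : ι → V → V) (α : ι → V) (L : List ι) :
    (inversionRoots σ α L).length = L.length := by
  induction L with
  | nil => rfl
  | cons a L ih => simp [inversionRoots, ih]

theorem getElem_inversionRoots (σ : ι → V → V) (α : ι → V) (L : List ι) (k : ℕ)
    (hk : k < (inversionRoots σ α L).length) :
    (inversionRoots σ α L)[k] = (L.take k).foldr σ (α (L[k]'(by simpa using hk))) := by
  induction L generalizing k with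
  | nil => simp at hk
  | cons a L ih =>
    cases k with
    | zero => simp [inversionRoots]
    | succ k => simp [inversionRoots, ih]

def rootProd (x : V → K → G) (R : List V) (w : ℕ → K) : G :=
  (R.mapIdx fun k γ => x γ (w k)).prod

@[simp]
theorem rootProd_nil (x : V → K → G) (w : ℕ → K) : rootProd x [] w = 1 := rfl

theorem rootProd_cons (x : V → K → G) (γ : V) (R : List V) (w : ℕ → K) :
    rootProd x (γ :: R) w = x γ (w 0) * rootProd x R (fun k => w (k + 1)) := by
  simp [rootProd, List.mapIdx_cons]

theorem rootProd_mem_closure {Pos : Set V} (x : V → K → G) {R : List V} (hR : ∀ γ ∈ R, γ ∈ Pos)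
    (w : ℕ → K) : rootProd x R w ∈ Subgroup.closure {g | ∃ β ∈ Pos, ∃ t, g = x β t} := by
  induction R generalizing w with
  | nil => exact Subgroup.one_mem _
  | cons γ R ih =>
    rw [rootProd_cons]
    exact Subgroup.mul_mem _ (Subgroup.subset_closure ⟨γ, hR γ (by simp), _, rfl⟩)
      (ih (fun β hβ => hR β (by simp [hβ])) _)

theorem exists_rootProd_mul_eq_mul_rootProd_map {Pos : Set V} {σ : ι → V → V}
    {x : V → K → G} {s : ι → G}
    (hconj : ∀ β ∈ Pos, ∀ i, σ i β ∈ Pos → ∀ t, ∃ t', x β t * s i = s i * x (σ i β) t')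
    (a : ι) {R : List V} (hR : ∀ γ ∈ R, γ ∈ Pos ∧ σ a γ ∈ Pos) (w : ℕ → K) :
    ∃ w', rootProd x R w * s a = s a * rootProd x (R.map (σ a)) w' := by
  induction R generalizing w with
  | nil => exact ⟨w, by simp⟩
  | cons γ R ih =>
    obtain ⟨w', hw'⟩ := ih (fun β hβ => hR β (by simp [hβ])) (fun k => w (k + 1))
    obtain ⟨t', ht'⟩ := hconj γ (hR γ (by simp)).1 a (hR γ (by simp)).2 (w 0)
    refine ⟨fun k => Nat.casesOn k t' w', ?_⟩
    rw [List.map_cons, rootProd_cons, rootProd_cons, mul_assoc, hw', ← mul_assoc, ht', mul_assoc]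
    rfl

theorem exists_prod_mul_prod_reverse_eq {Pos : Set V} {σ : ι → V → V} {α : ι → V}
    [One K] [Neg K] {x : V → K → G} {y s : ι → G}
    (hxs : ∀ i, x (α i) 1 * s i = y i * x (α i) (-1))
    (hcomm : ∀ i j, i ≠ j → Commute (x (α i) 1) (y j))
    (hconj : ∀ β ∈ Pos, ∀ i, σ i β ∈ Pos → ∀ t, ∃ t', x β t * s i = s i * x (σ i β) t')
    {L : List ι} (hL : L.Nodup) (hpos : ∀ m, ∀ γ ∈ inversionRoots σ α (L.drop m), γ ∈ Pos) :
    ∃ w, (L.map fun i => x (α i) 1).prod * (L.map s).reverse.prod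
      = (L.map y).reverse.prod * rootProd x (inversionRoots σ α L) w := by
  induction L with
  | nil => exact ⟨fun _ => 1, by simp [inversionRoots]⟩
  | cons a L ih =>
    obtain ⟨haL, hL⟩ := List.nodup_cons.mp hL
    obtain ⟨w, hw⟩ := ih hL fun m => hpos (m + 1)
    have hroots : ∀ γ ∈ inversionRoots σ α L, γ ∈ Pos ∧ σ a γ ∈ Pos := fun γ hγ =>
      ⟨hpos 1 γ hγ, hpos 0 _ (List.mem_cons_of_mem _ (List.mem_map_of_mem hγ))⟩
    obtain ⟨w', hw'⟩ := exists_rootProd_mul_eq_mul_rootProd_map hconj a hroots w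
    have hxy : Commute (x (α a) 1) (L.map y).reverse.prod :=
      Commute.list_prod_right _ _ fun g hg => by
        obtain ⟨j, hj, rfl⟩ := List.mem_map.mp (List.mem_reverse.mp hg)
        exact hcomm a j fun h => haL (h ▸ hj)
    refine ⟨fun k => Nat.casesOn k (-1) w', ?_⟩
    simp only [List.map_cons, List.prod_cons, List.reverse_cons, List.prod_append,
      List.prod_nil, mul_one, inversionRoots, rootProd_cons]
    calc x (α a) 1 * (L.map fun i => x (α i) 1).prod * ((L.map s).reverse.prod * s a)
        = x (α a) 1 * (L.map y).reverse.prod * (rootProd x (inversionRoots σ α L) w * s a) := by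
          rw [mul_assoc, ← mul_assoc _ _ (s a), hw, mul_assoc, mul_assoc]
      _ = (L.map y).reverse.prod * (x (α a) 1 * s a) *
            rootProd x ((inversionRoots σ α L).map (σ a)) w' := by
          rw [hw', hxy.eq]; group
      _ = _ := by
          rw [hxs]; simp only [mul_assoc]; rfl

end RootWords

theorem stmt_17_general {G : Type*} [Group G] {n : ℕ}
    -- root lattice data: positive roots, simple roots, simple reflections
    (Pos : Set (Fin n → ℤ))
    (σ : Fin n → (Fin n → ℤ) → (Fin n → ℤ))
    -- group elements
    (xr : (Fin n → ℤ) → ℂ → G) (y : Fin n → ℂ → G) (sbar : Fin n → G)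
    -- relation `x_i(1) s̄_i = y_i(1) x_i(−1)`
    (hxs : ∀ i, xr (Pi.single i 1) 1 * sbar i = y i 1 * xr (Pi.single i 1) (-1))
    -- relation `x_i(t) y_j(u) = y_j(u) x_i(t)` for `i ≠ j`
    (hcomm : ∀ i j : Fin n, i ≠ j → ∀ t u : ℂ,
      xr (Pi.single i 1) t * y j u = y j u * xr (Pi.single i 1) t)
    -- relation `x_β(t) s̄_i = s̄_i x_{s_i(β)}(t')` when `β` and `s_i(β)` are positive
    (hconj : ∀ β ∈ Pos, ∀ i : Fin n, σ i β ∈ Pos → ∀ t : ℂ, ∃ t' : ℂ,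
      xr β t * sbar i = sbar i * xr (σ i β) t')
    -- an enumeration `(i₁,…,i_n)` of `{1,…,n}`
    (e : Fin n ≃ Fin n)
    -- all partial images `s_{i_m} ⋯ s_{i_{k−1}}(α_{i_k})` are positive roots
    (hpos : ∀ k : Fin n, ∀ m : ℕ, m ≤ (k : ℕ) →
      ((((List.ofFn fun l => e l).drop m).take ((k : ℕ) - m)).foldr
          (fun i v => σ i v) (Pi.single (e k) 1)) ∈ Pos) :
    ∃ w : Fin n → ℂ,
      ((List.ofFn fun k => xr (Pi.single (e k) 1) 1).prod *
        ((List.ofFn fun k => sbar (e k)).reverse).prod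
      = ((List.ofFn fun k => y (e k) 1).reverse).prod *
        (List.ofFn fun k : Fin n =>
          xr (((List.ofFn fun l => e l).take (k : ℕ)).foldr
                (fun i v => σ i v) (Pi.single (e k) 1)) (w k)).prod) ∧
      (List.ofFn fun k : Fin n =>
          xr (((List.ofFn fun l => e l).take (k : ℕ)).foldr
                (fun i v => σ i v) (Pi.single (e k) 1)) (w k)).prod ∈
        Subgroup.closure {g : G | ∃ β ∈ Pos, ∃ t : ℂ, g = xr β t} := by
  set L := List.ofFn fun l => e l
  have hroots : ∀ m, ∀ γ ∈ inversionRoots σ (Pi.single · 1) (L.drop m), γ ∈ Pos := by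
    intro m γ hγ
    obtain ⟨j, hj, rfl⟩ := List.getElem_of_mem hγ
    have hk : m + j < n := by simp [L] at hj; omega
    rw [getElem_inversionRoots]
    simpa [L] using hpos ⟨m + j, hk⟩ m (Nat.le_add_right m j)
  obtain ⟨w, hw⟩ := exists_prod_mul_prod_reverse_eq (y := fun i => y i 1) hxs
    (fun i j hij => hcomm i j hij 1 1) hconj (List.nodup_ofFn.mpr e.injective) hroots
  have hprod : rootProd xr (inversionRoots σ (Pi.single · 1) L) w = (List.ofFn fun k : Fin n =>
      xr ((L.take (k : ℕ)).foldr (fun i v => σ i v) (Pi.single (e k) 1)) (w k)).prod := by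
    rw [rootProd]
    congr 1
    refine List.ext_getElem (by simp [L]) fun k _ _ => ?_
    simp [getElem_inversionRoots, L]
  refine ⟨fun k => w k, ?_, ?_⟩
  · rw [← hprod]
    simpa only [L, List.map_ofFn, List.map_reverse, Function.comp_def] using hw
  · rw [← hprod]
    exact rootProd_mem_closure xr (by simpa using hroots 0) w

/-- In a group `G` with one-parameter root elements `xr β t` (for `β` in a
set `Pos` of positive roots, with simple roots the standard basis vectors `αᵢ`), elements
`y i t`, and representatives `sbar i` of the simple reflections, satisfying
`x_i(1) s̄_i = y_i(1) x_i(−1)`, `x_i(t) y_j(u) = y_j(u) x_i(t)` for `i ≠ j`, and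
`x_β(t) s̄_i = s̄_i x_{s_i β}(t')` whenever `β, s_i β ∈ Pos`, one has for any enumeration
`(i₁,…,i_n)` (given by `e`): there exist `w₁,…,w_n ∈ ℂ` with
`x_{i₁}(1)⋯x_{i_n}(1) s̄_{i_n}⋯s̄_{i₁} = y_{i_n}(1)⋯y_{i₁}(1) · x_{γ₁}(wₙ)⋯x_{γₙ}(w₁)`,
where `γ_k = s_{i₁}⋯s_{i_{k−1}}(α_{i_k})`; in particular the right factor lies in the
subgroup `N` generated by the positive root elements. -/
theorem stmt_17 {G : Type*} [Group G] {n : ℕ}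
    -- root lattice data: positive roots, simple roots, simple reflections
    (Pos : Set (Fin n → ℤ))
    (σ : Fin n → (Fin n → ℤ) → (Fin n → ℤ))
    (hsimple : ∀ i, (Pi.single i 1 : Fin n → ℤ) ∈ Pos)
    -- group elements
    (xr : (Fin n → ℤ) → ℂ → G) (y : Fin n → ℂ → G) (sbar : Fin n → G)
    -- relation `x_i(1) s̄_i = y_i(1) x_i(−1)`
    (hxs : ∀ i, xr (Pi.single i 1) 1 * sbar i = y i 1 * xr (Pi.single i 1) (-1))
    -- relation `x_i(t) y_j(u) = y_j(u) x_i(t)` for `i ≠ j`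
    (hcomm : ∀ i j : Fin n, i ≠ j → ∀ t u : ℂ,
      xr (Pi.single i 1) t * y j u = y j u * xr (Pi.single i 1) t)
    -- relation `x_β(t) s̄_i = s̄_i x_{s_i(β)}(t')` when `β` and `s_i(β)` are positive
    (hconj : ∀ β ∈ Pos, ∀ i : Fin n, σ i β ∈ Pos → ∀ t : ℂ, ∃ t' : ℂ,
      xr β t * sbar i = sbar i * xr (σ i β) t')
    -- an enumeration `(i₁,…,i_n)` of `{1,…,n}`
    (e : Fin n ≃ Fin n)
    -- all partial images `s_{i_m} ⋯ s_{i_{k−1}}(α_{i_k})` are positive roots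
    (hpos : ∀ k : Fin n, ∀ m : ℕ, m ≤ (k : ℕ) →
      ((((List.ofFn fun l => e l).drop m).take ((k : ℕ) - m)).foldr
          (fun i v => σ i v) (Pi.single (e k) 1)) ∈ Pos) :
    ∃ w : Fin n → ℂ,
      ((List.ofFn fun k => xr (Pi.single (e k) 1) 1).prod *
        ((List.ofFn fun k => sbar (e k)).reverse).prod
      = ((List.ofFn fun k => y (e k) 1).reverse).prod *
        (List.ofFn fun k : Fin n =>
          xr (((List.ofFn fun l => e l).take (k : ℕ)).foldr
                (fun i v => σ i v) (Pi.single (e k) 1)) (w k)).prod) ∧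
      (List.ofFn fun k : Fin n =>
          xr (((List.ofFn fun l => e l).take (k : ℕ)).foldr
                (fun i v => σ i v) (Pi.single (e k) 1)) (w k)).prod ∈
        Subgroup.closure {g : G | ∃ β ∈ Pos, ∃ t : ℂ, g = xr β t} :=
  stmt_17_general Pos σ xr y sbar hxs hcomm hconj e hpos
end

section
/- Consider the algebra H of type B₂ over ℂ given by the quiver with vertices 1, 2, a loop ε₁ at vertex 1 with ε₁² = 0, and an arrow α : 2 → 1. For the indecomposable injective module I₁ with rank vector (1,2) (dimension vector (2,2)), the variety of locally free submodules of rank vector (1,1) is isomorphic to ℙ¹(ℂ), and hence has Euler characteristic 2; for all other rank vectors r ∈ {(0,0),(1,0),(1,2)} the locally free submodule variety is a point. Consequently F_{I₁}(t₁,t₂) = 1 + t₁ + 2t₁t₂ + t₁t₂². -/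
/-- A representation of the algebra `H = H(C, D, Ω)` over `ℂ`, given by `ℂ`-vector
spaces `carrier i` at each vertex, the loop actions `eps i` with `(eps i)^{cᵢ} = 0`, and
arrow maps `arrow i j : M_j → M_i` for `(i,j) ∈ Ω`, subject to the defining relations
(H1), (H2) of `H`. -/
structure HRep (n : ℕ) (cdeg : Fin n → ℕ) (Ω : Set (Fin n × Fin n))
    (C : Matrix (Fin n) (Fin n) ℤ) where
  carrier : Fin n → Type
  [acg : ∀ i, AddCommGroup (carrier i)]
  [mod : ∀ i, Module ℂ (carrier i)]
  eps : ∀ i, carrier i →ₗ[ℂ] carrier i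
  arrow : ∀ i j, carrier j →ₗ[ℂ] carrier i
  arrow_zero : ∀ i j, (i, j) ∉ Ω → arrow i j = 0
  nil : ∀ i, (eps i) ^ (cdeg i) = 0
  rel : ∀ i j, (i, j) ∈ Ω →
    ((eps i) ^ ((C j i).natAbs)) ∘ₗ (arrow i j) = (arrow i j) ∘ₗ ((eps j) ^ ((C i j).natAbs))

attribute [instance] HRep.acg HRep.mod

variable {n : ℕ} {cdeg : Fin n → ℕ} {Ω : Set (Fin n × Fin n)} {C : Matrix (Fin n) (Fin n) ℤ}

/-- A subrepresentation: a family of subspaces stable under the loops and the arrows. -/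
def HRep.IsSub (M : HRep n cdeg Ω C) (U : ∀ i, Submodule ℂ (M.carrier i)) : Prop :=
  (∀ i, Submodule.map (M.eps i) (U i) ≤ U i) ∧
  (∀ i j, Submodule.map (M.arrow i j) (U j) ≤ U i)

/-- `U` is a free `H_i = ℂ[εᵢ]/(εᵢ^{cᵢ})`-submodule of `M.carrier i` of rank `r`:
it has a `ℂ`-basis of the form `(εᵢ^a (g k))` with `k < r`, `a < cᵢ`. -/
def HRep.LocFreeRank (M : HRep n cdeg Ω C) (i : Fin n)
    (U : Submodule ℂ (M.carrier i)) (r : ℕ) : Prop :=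
  ∃ g : Fin r → M.carrier i, (∀ k, g k ∈ U) ∧
    LinearIndependent ℂ
      (fun p : Fin r × Fin (cdeg i) => ((M.eps i) ^ (p.2 : ℕ)) (g p.1)) ∧
    U = Submodule.span ℂ
      (Set.range (fun p : Fin r × Fin (cdeg i) => ((M.eps i) ^ (p.2 : ℕ)) (g p.1)))

/-- The quiver Grassmannian `Gr_{l.f.}(r, M)` of locally free subrepresentations with
rank vector `r` (as a set; in the paper it is a quasi-projective variety). -/
def HRep.GrLF (M : HRep n cdeg Ω C) (r : Fin n → ℕ) :
    Set (∀ i, Submodule ℂ (M.carrier i)) :=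
  {U | M.IsSub U ∧ ∀ i, M.LocFreeRank i (U i) (r i)}

private lemma prodMap_pow {A B : Type} [AddCommGroup A] [Module ℂ A]
    [AddCommGroup B] [Module ℂ B] (f : A →ₗ[ℂ] A) (g : B →ₗ[ℂ] B) (k : ℕ) :
    (f.prodMap g) ^ k = (f ^ k).prodMap (g ^ k) := by
  induction k with
  | zero => simp
  | succ k ih => rw [pow_succ, pow_succ, pow_succ, ih, LinearMap.prodMap_mul]

/-- The direct sum `M ⊕ N` of two `H`-modules. -/
def HRep.dsum (M N : HRep n cdeg Ω C) : HRep n cdeg Ω C where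
  carrier i := M.carrier i × N.carrier i
  eps i := (M.eps i).prodMap (N.eps i)
  arrow i j := (M.arrow i j).prodMap (N.arrow i j)
  arrow_zero i j h := by
    try dsimp only
    rw [M.arrow_zero i j h, N.arrow_zero i j h]
    ext x <;> simp
  nil i := by
    try dsimp only
    rw [prodMap_pow, M.nil, N.nil]
    ext x <;> simp
  rel i j h := by
    try dsimp only
    simp only [prodMap_pow, LinearMap.prodMap_comp, M.rel i j h, N.rel i j h]

/-! ### The type `B₂` algebra `H` and its indecomposable injective module `I₁`

`H` is given by the quiver with vertices `1, 2` (here `0, 1`), a loop `ε₁` at vertex `1`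
with `ε₁² = 0`, and an arrow `α : 2 → 1`; `C = !![2,-1;-2,2]`, `D = diag(2,1)`,
`Ω = {(1,2)}`. -/

abbrev cdegB2 : Fin 2 → ℕ := ![2, 1]
abbrev ΩB2 : Set (Fin 2 × Fin 2) := {((0 : Fin 2), (1 : Fin 2))}
abbrev CB2 : Matrix (Fin 2) (Fin 2) ℤ := !![2, -1; -2, 2]

/-- The action of `ε₁` on `M₁ ≅ H₁ = ℂ[ε₁]/(ε₁²)` (basis `1, ε₁`): `v ↦ (0, v 0)`. -/
noncomputable def epsB2 : (Fin 2 → ℂ) →ₗ[ℂ] (Fin 2 → ℂ) :=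
  (LinearMap.single ℂ (fun _ : Fin 2 => ℂ) 1).comp (LinearMap.proj 0)

lemma epsB2_sq : epsB2 ^ 2 = 0 := by
  ext v j
  simp [epsB2, pow_two, Pi.single_apply]

/-- The indecomposable injective `H`-module `I₁` in type `B₂`: rank vector `(1,2)`,
dimension vector `(2,2)`, with `M₁ ≅ H₁`, `M₂ ≅ ℂ²` and the arrow map an isomorphism. -/
noncomputable def I₁ : HRep 2 cdegB2 ΩB2 CB2 where
  carrier _ := Fin 2 → ℂ
  eps := ![epsB2, 0]
  arrow i j := if i = 0 ∧ j = 1 then LinearMap.id else 0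
  arrow_zero i j h := by
    fin_cases i <;> fin_cases j <;> simp_all [ΩB2]
  nil i := by
    fin_cases i
    · simpa using epsB2_sq
    · simp
  rel i j h := by
    have : i = 0 ∧ j = 1 := by
      have := Set.mem_singleton_iff.mp h
      exact ⟨congrArg Prod.fst this, congrArg Prod.snd this⟩
    obtain ⟨rfl, rfl⟩ := this
    have h2 : ((CB2 1 0).natAbs) = 2 := by decide
    have h1 : ((CB2 0 1).natAbs) = 1 := by decide
    rw [h1, h2]
    show (![epsB2, 0] 0 ^ 2) ∘ₗ _ = _ ∘ₗ (![epsB2, 0] 1 ^ 1)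
    simp [epsB2_sq]

/-! In `I₁` the arrow `α` is the identity `ℂ² → ℂ²`, so a subrepresentation is a pair
`U₂ ⊆ U₁` with `U₁` stable under `ε₁`. A locally free `U₁` of rank `r₁` has dimension `2 r₁`
inside the two-dimensional `M₁`, so it is `0` (with `r₁ = 0`) or all of `M₁` (with `r₁ = 1`);
at vertex 2 (`c₂ = 1`) local freeness of rank `r₂` just means dimension `r₂`. Hence
`Gr(0, r₂)` is a point for `r₂ = 0` and empty otherwise, while `Gr(1, r₂)` is the Grassmannian
of `r₂`-planes in `ℂ²`: a point for `r₂ = 0, 2` and `ℙ¹` for `r₂ = 1`. -/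

open Module

theorem Set.exists_eq_singleton_of_equiv {α β : Type*} {s : Set α} {b : β}
    (e : s ≃ ({b} : Set β)) : ∃ a, s = {a} :=
  Set.exists_eq_singleton_iff_nonempty_subsingleton.2
    ⟨⟨_, (e.symm ⟨b, rfl⟩).2⟩, (Set.subsingleton_coe s).1 e.subsingleton⟩

namespace Submodule

variable {K V : Type*} [Field K] [AddCommGroup V] [Module K V] [FiniteDimensional K V]

theorem setOf_finrank_eq_zero : {W : Submodule K V | finrank K W = 0} = {⊥} := by
  ext W
  simp [finrank_eq_zero]

theorem setOf_finrank_eq_finrank {d : ℕ} (hd : finrank K V = d) :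
    {W : Submodule K V | finrank K W = d} = {⊤} := by
  subst hd
  ext W
  refine ⟨eq_top_of_finrank_eq, ?_⟩
  rintro rfl
  exact finrank_top K V

end Submodule

namespace HRep

variable {M : HRep n cdeg Ω C} {i : Fin n} {U : Submodule ℂ (M.carrier i)} {r : ℕ}

theorem locFreeRank_zero_iff : M.LocFreeRank i U 0 ↔ U = ⊥ := by
  constructor
  · rintro ⟨g, -, -, rfl⟩
    rw [Set.range_eq_empty, Submodule.span_empty]
  · rintro rfl
    exact ⟨Fin.elim0, (·.elim0), linearIndependent_empty_type,
      by rw [Set.range_eq_empty, Submodule.span_empty]⟩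

theorem LocFreeRank.finrank_eq (h : M.LocFreeRank i U r) : finrank ℂ U = r * cdeg i := by
  obtain ⟨g, -, hli, rfl⟩ := h
  simp [finrank_span_eq_card hli]

theorem locFreeRank_iff_finrank_eq (hc : cdeg i = 1) [FiniteDimensional ℂ U] :
    M.LocFreeRank i U r ↔ finrank ℂ U = r := by
  have : Unique (Fin (cdeg i)) := hc ▸ Fin.instUnique
  have hfam : ∀ g : Fin r → M.carrier i,
      (fun p : Fin r × Fin (cdeg i) => (M.eps i ^ (p.2 : ℕ)) (g p.1)) =
        g ∘ Equiv.prodUnique (Fin r) (Fin (cdeg i)) := by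
    intro g
    ext p
    have : (p.2 : ℕ) = 0 := by have := p.2.isLt; omega
    simp [this]
  refine ⟨fun h => by rw [h.finrank_eq, hc, mul_one], fun h => ?_⟩
  let b := Module.finBasisOfFinrankEq ℂ U h
  refine ⟨U.subtype ∘ b, fun k => (b k).2, ?_, ?_⟩
  · rw [hfam, linearIndependent_equiv]
    exact b.linearIndependent.map' U.subtype U.ker_subtype
  · rw [hfam, EquivLike.range_comp, Set.range_comp, Submodule.span_image, b.span_eq,
      Submodule.map_subtype_top]

theorem locFreeRank_top_of_basis (g : Fin r → M.carrier i)
    (b : Basis (Fin r × Fin (cdeg i)) ℂ (M.carrier i))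
    (hb : ⇑b = fun p => (M.eps i ^ (p.2 : ℕ)) (g p.1)) : M.LocFreeRank i ⊤ r :=
  ⟨g, fun _ => trivial, hb ▸ b.linearIndependent, by rw [← hb, b.span_eq]⟩

end HRep

namespace I₁

instance (i : Fin 2) : FiniteDimensional ℂ (I₁.carrier i) :=
  inferInstanceAs (FiniteDimensional ℂ (Fin 2 → ℂ))

theorem finrank_carrier (i : Fin 2) : finrank ℂ (I₁.carrier i) = 2 :=
  Module.finrank_fin_fun ℂ

theorem isSub_iff {U : ∀ i, Submodule ℂ (I₁.carrier i)} :
    I₁.IsSub U ↔ Submodule.map (I₁.eps 0) (U 0) ≤ U 0 ∧ U 1 ≤ U 0 := by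
  simp only [HRep.IsSub, Fin.forall_fin_two]
  rw [I₁.arrow_zero 0 0 (by simp), I₁.arrow_zero 1 0 (by simp), I₁.arrow_zero 1 1 (by simp),
    show I₁.eps 1 = 0 from rfl]
  simp only [Submodule.map_zero, bot_le, and_true, true_and]
  exact and_congr_right' Submodule.map_le_iff_le_comap

theorem locFreeRank_top : I₁.LocFreeRank 0 ⊤ 1 := by
  refine HRep.locFreeRank_top_of_basis (fun _ => Pi.single 0 1)
    ((Pi.basisFun ℂ (Fin 2)).reindex (Equiv.uniqueProd (Fin 2) (Fin 1)).symm) ?_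
  funext ⟨k, a⟩
  show ((Pi.basisFun ℂ (Fin 2)).reindex (Equiv.uniqueProd (Fin 2) (Fin 1)).symm) (k, a) =
    (epsB2 ^ (a : ℕ)) (Pi.single 0 1)
  fin_cases a <;> simp [epsB2]

theorem locFreeRank_vertex_zero_iff {V : Submodule ℂ (I₁.carrier 0)} {r : ℕ} :
    I₁.LocFreeRank 0 V r ↔ r = 0 ∧ V = ⊥ ∨ r = 1 ∧ V = ⊤ := by
  constructor
  · intro h
    have hrank : finrank ℂ V = r * 2 := h.finrank_eq
    have hr : r ≤ 1 := by
      have := Submodule.finrank_le V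
      rw [finrank_carrier] at this
      omega
    interval_cases r
    · exact Or.inl ⟨rfl, HRep.locFreeRank_zero_iff.1 h⟩
    · exact Or.inr ⟨rfl, Submodule.eq_top_of_finrank_eq (by rw [hrank, finrank_carrier])⟩
  · rintro (⟨rfl, rfl⟩ | ⟨rfl, rfl⟩)
    exacts [HRep.locFreeRank_zero_iff.2 rfl, locFreeRank_top]

theorem mem_grLF_iff {r : Fin 2 → ℕ} {U : ∀ i, Submodule ℂ (I₁.carrier i)} :
    U ∈ I₁.GrLF r ↔
      (r 0 = 0 ∧ U 0 = ⊥ ∨ r 0 = 1 ∧ U 0 = ⊤) ∧ U 1 ≤ U 0 ∧ finrank ℂ (U 1) = r 1 := by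
  simp only [HRep.GrLF, Set.mem_ofPred_eq, Fin.forall_fin_two, isSub_iff,
    locFreeRank_vertex_zero_iff, HRep.locFreeRank_iff_finrank_eq (rfl : cdegB2 1 = 1)]
  constructor
  · rintro ⟨⟨-, h01⟩, h0, h1⟩
    exact ⟨h0, h01, h1⟩
  · rintro ⟨h0, h01, h1⟩
    refine ⟨⟨?_, h01⟩, h0, h1⟩
    rcases h0 with ⟨-, h⟩ | ⟨-, h⟩ <;> rw [h]
    exacts [by simp, le_top]

theorem grLF_zero_zero : I₁.GrLF ![0, 0] = {⊥} := by
  ext U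
  simp only [mem_grLF_iff, Set.mem_singleton_iff]
  constructor
  · rintro ⟨⟨-, h0⟩ | ⟨h, -⟩, h01, -⟩
    · funext i
      fin_cases i
      exacts [h0, eq_bot_iff.2 (h01.trans h0.le)]
    · simp at h
  · rintro rfl
    exact ⟨Or.inl ⟨rfl, rfl⟩, le_rfl, finrank_bot ℂ _⟩

noncomputable def grLFOneEquiv (b : ℕ) :
    I₁.GrLF ![1, b] ≃ {V : Submodule ℂ (Fin 2 → ℂ) | finrank ℂ V = b} where
  toFun U := ⟨U.1 1, (mem_grLF_iff.1 U.2).2.2⟩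
  invFun V := ⟨![⊤, V.1], mem_grLF_iff.2 ⟨Or.inr ⟨rfl, rfl⟩, le_top, V.2⟩⟩
  left_inv U := by
    obtain ⟨h0, -, -⟩ := mem_grLF_iff.1 U.2
    ext1
    funext i
    fin_cases i
    · exact (h0.resolve_left (by simp)).2.symm
    · rfl
  right_inv V := rfl

theorem rank_mem_of_mem_grLF {r : Fin 2 → ℕ} {U : ∀ i, Submodule ℂ (I₁.carrier i)}
    (hU : U ∈ I₁.GrLF r) : r ∈ ({![0, 0], ![1, 0], ![1, 1], ![1, 2]} : Set (Fin 2 → ℕ)) := by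
  obtain ⟨h0, h01, h1⟩ := mem_grLF_iff.1 hU
  have hr : r = ![r 0, r 1] := by
    funext i
    fin_cases i <;> rfl
  have h1le : r 1 ≤ 2 := h1 ▸ (Submodule.finrank_le _).trans_eq (finrank_carrier 1)
  rcases h0 with ⟨hr0, hU0⟩ | ⟨hr0, -⟩
  · have : r 1 = 0 := by rw [← h1, eq_bot_iff.2 (h01.trans hU0.le), finrank_bot]
    rw [hr, hr0, this]
    simp
  · interval_cases h : r 1 <;> rw [hr, hr0] <;> simp

end I₁

open MvPolynomial in
theorem MvPolynomial.monomial_equivFunOnFinite_symm_fin_two {R : Type*} [CommSemiring R]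
    (a b : ℕ) (c : R) :
    monomial (Finsupp.equivFunOnFinite.symm ![a, b]) c =
      MvPolynomial.C c * X 0 ^ a * X 1 ^ b := by
  rw [monomial_eq, Finsupp.prod_fintype _ _ (fun _ => pow_zero _), Fin.prod_univ_two, mul_assoc]
  rfl

/-- For the indecomposable injective module `I₁` (rank vector `(1,2)`) of
the type `B₂` algebra `H`, the variety of locally free submodules of rank vector `(1,1)`
is isomorphic to `ℙ¹(ℂ)` (hence has Euler characteristic `2`); for the rank vectors
`(0,0), (1,0), (1,2)` the submodule variety is a point; all other rank vectors give the
empty variety.  Consequently `F_{I₁}(t₁,t₂) = 1 + t₁ + 2 t₁t₂ + t₁t₂²`, where `χ` is any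
Euler characteristic (`χ(∅) = 0`, `χ(pt) = 1`, `χ(ℙ¹) = 2`). -/
theorem stmt_18
    (chi : Set (∀ i, Submodule ℂ (I₁.carrier i)) → ℤ)
    (hchi0 : chi ∅ = 0)
    (hchi1 : ∀ S : Set (∀ i, Submodule ℂ (I₁.carrier i)), (∃ U, S = {U}) → chi S = 1)
    (hchiP : ∀ S : Set (∀ i, Submodule ℂ (I₁.carrier i)),
      Nonempty (S ≃ Projectivization ℂ (Fin 2 → ℂ)) → chi S = 2) :
    Nonempty (I₁.GrLF ![1, 1] ≃ Projectivization ℂ (Fin 2 → ℂ)) ∧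
    (∀ r ∈ ({![0,0], ![1,0], ![1,2]} : Set (Fin 2 → ℕ)), ∃ U, I₁.GrLF r = {U}) ∧
    (∀ r : Fin 2 → ℕ, r ∉ ({![0,0], ![1,0], ![1,1], ![1,2]} : Set (Fin 2 → ℕ)) →
      I₁.GrLF r = ∅) ∧
    (∑ r ∈ Finset.Iic ![1, 2],
        MvPolynomial.monomial (Finsupp.equivFunOnFinite.symm r) (chi (I₁.GrLF r)))
      = (1 + MvPolynomial.X 0 + 2 * (MvPolynomial.X 0 * MvPolynomial.X 1)
          + MvPolynomial.X 0 * MvPolynomial.X 1 ^ 2 : MvPolynomial (Fin 2) ℤ) := by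
  have hP1 : Nonempty (I₁.GrLF ![1, 1] ≃ Projectivization ℂ (Fin 2 → ℂ)) :=
    ⟨(I₁.grLFOneEquiv 1).trans (Projectivization.equivSubmodule ℂ _).symm⟩
  have h00 : ∃ U, I₁.GrLF ![0, 0] = {U} := ⟨⊥, I₁.grLF_zero_zero⟩
  have h10 : ∃ U, I₁.GrLF ![1, 0] = {U} :=
    Set.exists_eq_singleton_of_equiv
      ((I₁.grLFOneEquiv 0).trans (Equiv.setCongr Submodule.setOf_finrank_eq_zero))
  have h12 : ∃ U, I₁.GrLF ![1, 2] = {U} :=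
    Set.exists_eq_singleton_of_equiv
      ((I₁.grLFOneEquiv 2).trans
        (Equiv.setCongr (Submodule.setOf_finrank_eq_finrank (Module.finrank_fin_fun ℂ))))
  have hempty : ∀ r : Fin 2 → ℕ, r ∉ ({![0,0], ![1,0], ![1,1], ![1,2]} : Set (Fin 2 → ℕ)) →
      I₁.GrLF r = ∅ := fun r hr =>
    Set.eq_empty_of_forall_notMem fun _ hU => hr (I₁.rank_mem_of_mem_grLF hU)
  refine ⟨hP1, by simpa using ⟨h00, h10, h12⟩, hempty, ?_⟩
  rw [show Finset.Iic ![1, 2] = {![0, 0], ![0, 1], ![0, 2], ![1, 0], ![1, 1], ![1, 2]} by decide]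
  rw [Finset.sum_insert (by decide), Finset.sum_insert (by decide), Finset.sum_insert (by decide),
    Finset.sum_insert (by decide), Finset.sum_insert (by decide), Finset.sum_singleton,
    hchi1 _ h00, hchi1 _ h10, hchi1 _ h12, hchiP _ hP1, hempty ![0, 1] (by simp),
    hempty ![0, 2] (by simp), hchi0]
  simp only [MvPolynomial.monomial_equivFunOnFinite_symm_fin_two, map_zero, map_one, map_ofNat]
  ring
end
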